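/- arXiv:2604.08416 — 2 statements merged into one kernel-verified Lean document; each statement's English description precedes it below -/
import Mathlib

section
/- Let $Q \subseteq \mathbb{R}^d$ be a cube, $1 \le u \le p \le q < \infty$, and let $w$ be a Muckenhoupt $A_u$ weight on $\mathbb{R}^d$. Set $\alpha = (u-1)(\frac1p - \frac1q)$. Then $[w^{1/q}, w^{1/p}]_{A^{\alpha}_{p,q}(Q)} \le [w]_{A_p}^{1/p}\,[w]_{A_u}^{\frac1p - \frac1q}\,\big(\frac{|Q|^u}{w(Q)}\big)^{\frac1p - \frac1q}$; in particular $(w^{1/q}, w^{1/p}) \in A^{\alpha}_{p,q}(Q)$. -/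
open MeasureTheory
open scoped ENNReal NNReal

noncomputable section

abbrev Euc (d : ℕ) := EuclideanSpace ℝ (Fin d)

structure Cube (d : ℕ) where
  center : Euc d
  side : ℝ
  side_pos : 0 < side

namespace Cube

variable {d : ℕ}

/-- A (half-open) axis-parallel cube in `ℝ^d`. -/
def toSet (Q : Cube d) : Set (Euc d) :=
  {x | ∀ i, Q.center i - Q.side / 2 ≤ x i ∧ x i < Q.center i + Q.side / 2}

/-- The volume `|Q| = ℓ(Q)^d` of a cube. -/
def vol (Q : Cube d) : ℝ := Q.side ^ d

/-- The average `⟨f⟩_Q = |Q|⁻¹ ∫_Q f`. -/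
def avg (Q : Cube d) (f : Euc d → ℝ) : ℝ := Q.vol⁻¹ * ∫ x in Q.toSet, f x

/-- The `ℝ≥0∞`-valued average of a nonnegative function. -/
def elavg (Q : Cube d) (g : Euc d → ℝ≥0∞) : ℝ≥0∞ :=
  (∫⁻ x in Q.toSet, g x) / ENNReal.ofReal Q.vol

/-- The `L^t`-average `⟨f⟩_{t,Q} = (|Q|⁻¹ ∫_Q |f|^t)^{1/t}`, with the
essential supremum when `t = ∞`. -/
def lavg (Q : Cube d) (t : ℝ≥0∞) (f : Euc d → ℝ) : ℝ≥0∞ :=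
  if t = ⊤ then essSup (fun x => ENNReal.ofReal |f x|) (volume.restrict Q.toSet)
  else ((∫⁻ x in Q.toSet, ENNReal.ofReal |f x| ^ t.toReal) / ENNReal.ofReal Q.vol) ^ (1 / t.toReal)

/-- The concentric dilation `γ Q` of a cube (only intended for `γ ≥ 1`). -/
def scale (γ : ℝ) (Q : Cube d) : Cube d :=
  ⟨Q.center, max γ 1 * Q.side,
    mul_pos (lt_of_lt_of_le one_pos (le_max_right γ 1)) Q.side_pos⟩

/-- The dyadic subcube of `Q` of generation `j` with index `k`. -/
def dyadicSub (Q : Cube d) (j : ℕ) (k : Fin d → ℕ) : Cube d where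
  center := WithLp.toLp 2 fun i => Q.center i - Q.side / 2 + ((k i : ℝ) + 1 / 2) * (Q.side / 2 ^ j)
  side := Q.side / 2 ^ j
  side_pos := div_pos Q.side_pos (by positivity)

/-- The `2ℓ(Q)`-periodic even reflection map: `reflect Q x ∈ Q` and functions
defined on `Q` are extended outside `Q` by precomposing with `reflect Q`. -/
def reflect (Q : Cube d) (x : Euc d) : Euc d := WithLp.toLp 2 fun i =>
  (Q.center i - Q.side / 2) + Q.side -
    |(x i - (Q.center i - Q.side / 2) -
        2 * Q.side * ((⌊(x i - (Q.center i - Q.side / 2)) / (2 * Q.side)⌋ : ℤ) : ℝ)) - Q.side|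

end Cube

/-- `R` is a dyadic subcube of `Q`. -/
def IsDyadicSub {d : ℕ} (Q R : Cube d) : Prop :=
  ∃ (j : ℕ) (k : Fin d → ℕ), (∀ i, k i < 2 ^ j) ∧ R = Q.dyadicSub j k

/-- A collection of cubes is sparse if each `R` carries a subset `E R ⊆ R`
with `|E R| ≥ |R|/2`, the sets `E R` being pairwise disjoint. -/
def IsSparse {d : ℕ} (𝒮 : Set (Cube d)) : Prop :=
  ∃ E : Cube d → Set (Euc d),
    (∀ R ∈ 𝒮, MeasurableSet (E R) ∧ E R ⊆ R.toSet ∧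
      ENNReal.ofReal R.vol ≤ 2 * volume (E R)) ∧
    𝒮.Pairwise fun R R' => Disjoint (E R) (E R')

/-- The Hölder conjugate `p'` of `p`, as an extended real exponent. -/
def conjE (p : ℝ) : ℝ≥0∞ := if p = 1 then ⊤ else ENNReal.ofReal (p / (p - 1))

/-- The two-weight Muckenhoupt characteristic
`[ω,σ]_{A^α_{p,q}(Q)} = sup_{R ⊆ Q} |R|^α ⟨ω⟩_{q,R} ⟨σ⁻¹⟩_{p',R}`. -/
def muck {d : ℕ} (Q : Cube d) (p q α : ℝ) (ω σ : Euc d → ℝ) : ℝ≥0∞ :=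
  ⨆ R : {R : Cube d // R.toSet ⊆ Q.toSet},
    ENNReal.ofReal (R.1.vol ^ α) * R.1.lavg (ENNReal.ofReal q) ω *
      R.1.lavg (conjE p) fun x => (σ x)⁻¹

/-- The classical Muckenhoupt `A_p` characteristic
`[w]_{A_p} = sup_Q ⟨w⟩_{1,Q} ⟨w⁻¹⟩_{1/(p-1),Q}` over all cubes in `ℝ^d`. -/
def apChar (d : ℕ) (p : ℝ) (w : Euc d → ℝ) : ℝ≥0∞ :=
  ⨆ R : Cube d,
    R.lavg 1 w * R.lavg (if p = 1 then ⊤ else ENNReal.ofReal (1 / (p - 1))) fun x => (w x)⁻¹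

/-- The localized maximal function `M(w 1_R)(x) = sup_{S ⊆ R, x ∈ S} ⟨w⟩_{1,S}`. -/
def locMaxFn {d : ℕ} (R : Cube d) (w : Euc d → ℝ) (x : Euc d) : ℝ≥0∞ :=
  ⨆ S : {S : Cube d // S.toSet ⊆ R.toSet ∧ x ∈ S.toSet}, S.1.lavg 1 w

/-- The local Fujii–Wilson `A_∞(Q)` characteristic. -/
def ainf {d : ℕ} (Q : Cube d) (w : Euc d → ℝ) : ℝ≥0∞ :=
  ⨆ R : {R : Cube d // R.toSet ⊆ Q.toSet},
    (∫⁻ x in R.1.toSet, locMaxFn R.1 w x) / ∫⁻ x in R.1.toSet, ENNReal.ofReal (w x)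

/-- The weighted norm `‖g‖_{L^p_σ(A)} = (∫_A |g|^p σ^p)^{1/p}` (weight as multiplier). -/
def wLp {d : ℕ} (A : Set (Euc d)) (p : ℝ) (σ g : Euc d → ℝ) : ℝ≥0∞ :=
  (∫⁻ x in A, ENNReal.ofReal (|g x| * σ x) ^ p) ^ (1 / p)

/-- The fractional difference quotient
`f^{s,r}_A(x) = (∫_A |f(x)-f(y)|^r / |x-y|^{d+sr} dy)^{1/r}`. -/
def fsr {d : ℕ} (A : Set (Euc d)) (s r : ℝ) (f : Euc d → ℝ) (x : Euc d) : ℝ≥0∞ :=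
  (∫⁻ y in A, ENNReal.ofReal |f x - f y| ^ r / edist x y ^ ((d : ℝ) + s * r)) ^ (1 / r)

/-- `f^{s,r}_{3R}`, where `f` is extended outside `Q` by periodic reflection. -/
def fsr3 {d : ℕ} (Q : Cube d) (s r : ℝ) (f : Euc d → ℝ) (R : Cube d) (x : Euc d) : ℝ≥0∞ :=
  fsr (Cube.scale 3 R).toSet s r (fun y => f (Q.reflect y)) x

/-- The weighted weak norm `‖g‖_{L^{q,∞}_ω(Q)}` of an `ℝ≥0∞`-valued function. -/
def weakNE {d : ℕ} (Q : Cube d) (q : ℝ) (ω : Euc d → ℝ) (g : Euc d → ℝ≥0∞) : ℝ≥0∞ :=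
  ⨆ lam : ℝ≥0, (lam : ℝ≥0∞) *
    (∫⁻ x in Q.toSet ∩ {x | (lam : ℝ≥0∞) < g x}, ENNReal.ofReal (ω x) ^ q) ^ (1 / q)

/-- The weighted weak norm `‖g‖_{L^{q,∞}_ω(Q)}` of a real valued function. -/
def weakN {d : ℕ} (Q : Cube d) (q : ℝ) (ω g : Euc d → ℝ) : ℝ≥0∞ :=
  weakNE Q q ω fun x => ENNReal.ofReal |g x|

/-- The weighted Triebel–Lizorkin seminorm `[u]_{F^{s,σ}_{p,r}(Q)}`. -/
def fSemi {d : ℕ} (Q : Cube d) (p r s : ℝ) (σ u : Euc d → ℝ) : ℝ≥0∞ :=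
  (∫⁻ x in Q.toSet, fsr Q.toSet s r u x ^ p * ENNReal.ofReal (σ x) ^ p) ^ (1 / p)

/-! Write `a_R = ⟨w⟩_{1,R}`. The quantity inside the supremum equals
`(|R|^{u-1} / a_R)^{1/p-1/q} (a_R ⟨w⁻¹⟩_{1/(p-1),R})^{1/p}`, and the second factor is at most
`[w]_{A_p}`. For the first, Hölder's inequality gives `1 ≤ a_R ⟨w⁻¹⟩_{1/(u-1),R}`, while
`|R|^{u-1} ⟨w⁻¹⟩_{1/(u-1),R}` is the unnormalized `L^{1/(u-1)}(R)` norm of `w⁻¹`, which increases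
with `R`. Hence `|R|^{u-1} / a_R ≤ |Q|^{u-1} ⟨w⁻¹⟩_{1/(u-1),Q} ≤ [w]_{A_u} |Q|^{u-1} / a_Q`,
and `|Q|^{u-1} / a_Q = |Q|^u / w(Q)`. -/

namespace Cube

variable {d : ℕ}

lemma vol_pos (R : Cube d) : 0 < R.vol := pow_pos R.side_pos d

lemma volume_toSet (R : Cube d) : volume R.toSet = ENNReal.ofReal R.vol := by
  have hpi : R.toSet = (MeasurableEquiv.toLp 2 (Fin d → ℝ)).symm ⁻¹'
      Set.univ.pi fun i => Set.Ico (R.center i - R.side / 2) (R.center i + R.side / 2) := by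
    ext x
    simp [toSet, Set.mem_pi, Set.mem_Ico]
  have hside : ∀ i : Fin d,
      volume (Set.Ico (R.center i - R.side / 2) (R.center i + R.side / 2)) =
        ENNReal.ofReal R.side := by
    intro i
    rw [Real.volume_Ico]
    ring_nf
  rw [hpi, (EuclideanSpace.volume_preserving_symm_measurableEquiv_toLp (Fin d)).measure_preimage
      (MeasurableSet.univ_pi fun _ => measurableSet_Ico).nullMeasurableSet, volume_pi_pi]
  simp_rw [hside, Finset.prod_const, Finset.card_univ, Fintype.card_fin, vol,
    ← ENNReal.ofReal_pow R.side_pos.le]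

def normalizedVolume (R : Cube d) : Measure (Euc d) :=
  (ENNReal.ofReal R.vol)⁻¹ • volume.restrict R.toSet

instance (R : Cube d) : IsProbabilityMeasure R.normalizedVolume := by
  constructor
  rw [normalizedVolume, Measure.smul_apply, smul_eq_mul, Measure.restrict_apply_univ,
    R.volume_toSet]
  exact ENNReal.inv_mul_cancel (ENNReal.ofReal_pos.mpr R.vol_pos).ne' ENNReal.ofReal_ne_top

lemma lavg_eq_eLpNorm (R : Cube d) {t : ℝ≥0∞} (ht : t ≠ 0) (f : Euc d → ℝ) :
    R.lavg t f = eLpNorm f t R.normalizedVolume := by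
  rcases eq_or_ne t ⊤ with rfl | htop
  · rw [lavg, if_pos rfl, eLpNorm_exponent_top, normalizedVolume,
      eLpNormEssSup_ennreal_smul_measure (ENNReal.inv_ne_zero.mpr ENNReal.ofReal_ne_top),
      eLpNormEssSup]
    simp_rw [Real.enorm_eq_ofReal_abs]
  · rw [lavg, if_neg htop, eLpNorm_eq_lintegral_rpow_enorm_toReal ht htop, normalizedVolume,
      lintegral_smul_measure]
    simp_rw [Real.enorm_eq_ofReal_abs, ENNReal.div_eq_inv_mul, smul_eq_mul]

lemma ofReal_vol_rpow_mul_lavg (R : Cube d) {t : ℝ≥0∞} (ht : t ≠ 0) (f : Euc d → ℝ) :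
    ENNReal.ofReal R.vol ^ (1 / t).toReal * R.lavg t f =
      eLpNorm f t (volume.restrict R.toSet) := by
  rw [R.lavg_eq_eLpNorm ht, normalizedVolume,
    eLpNorm_smul_measure_of_ne_zero (ENNReal.inv_ne_zero.mpr ENNReal.ofReal_ne_top), smul_eq_mul,
    ← mul_assoc, ← ENNReal.mul_rpow_of_nonneg _ _ ENNReal.toReal_nonneg,
    ENNReal.mul_inv_cancel (ENNReal.ofReal_pos.mpr R.vol_pos).ne' ENNReal.ofReal_ne_top,
    ENNReal.one_rpow, one_mul]

lemma ofReal_vol_rpow_mul_lavg_mono {R Q : Cube d} (hRQ : R.toSet ⊆ Q.toSet) {t : ℝ≥0∞}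
    (ht : t ≠ 0) (f : Euc d → ℝ) :
    ENNReal.ofReal R.vol ^ (1 / t).toReal * R.lavg t f ≤
      ENNReal.ofReal Q.vol ^ (1 / t).toReal * Q.lavg t f := by
  rw [R.ofReal_vol_rpow_mul_lavg ht, Q.ofReal_vol_rpow_mul_lavg ht]
  exact eLpNorm_mono_measure f (Measure.restrict_mono hRQ le_rfl)

lemma lavg_one_of_nonneg (R : Cube d) {f : Euc d → ℝ} (hf : ∀ x, 0 ≤ f x) :
    R.lavg 1 f = (∫⁻ x in R.toSet, ENNReal.ofReal (f x)) / ENNReal.ofReal R.vol := by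
  simp only [lavg, if_neg ENNReal.one_ne_top, ENNReal.toReal_one, abs_of_nonneg (hf _),
    ENNReal.rpow_one, div_one]

lemma lavg_rpow (R : Cube d) {t : ℝ≥0∞} (ht : t ≠ 0) {f : Euc d → ℝ} (hf : ∀ x, 0 ≤ f x)
    {r : ℝ} (hr : 0 < r) :
    R.lavg t (fun x => f x ^ r) = R.lavg (t * ENNReal.ofReal r) f ^ r := by
  rw [R.lavg_eq_eLpNorm ht, R.lavg_eq_eLpNorm (mul_ne_zero ht (ENNReal.ofReal_pos.mpr hr).ne'),
    ← eLpNorm_norm_rpow f hr]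
  simp_rw [Real.norm_of_nonneg (hf _)]

lemma lavg_le_lavg_of_exponent_le (R : Cube d) {s t : ℝ≥0∞} (hs : s ≠ 0) (hst : s ≤ t)
    {f : Euc d → ℝ} (hf : Measurable f) : R.lavg s f ≤ R.lavg t f := by
  rw [R.lavg_eq_eLpNorm hs, R.lavg_eq_eLpNorm (ne_bot_of_le_ne_bot hs hst)]
  exact eLpNorm_le_eLpNorm_of_exponent_le hst hf.aestronglyMeasurable

lemma ofReal_vol_rpow_div_lavg_one (R : Cube d) {f : Euc d → ℝ}
    (hf : ∀ x, 0 ≤ f x) (u : ℝ) :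
    ENNReal.ofReal R.vol ^ (u - 1) / R.lavg 1 f =
      ENNReal.ofReal (R.vol ^ u) / ∫⁻ x in R.toSet, ENNReal.ofReal (f x) := by
  have hV : ENNReal.ofReal R.vol ≠ 0 := (ENNReal.ofReal_pos.mpr R.vol_pos).ne'
  rw [R.lavg_one_of_nonneg hf, ← ENNReal.ofReal_rpow_of_pos R.vol_pos,
    ← sub_add_cancel u 1, ENNReal.rpow_add _ _ hV ENNReal.ofReal_ne_top, add_sub_cancel_right,
    ENNReal.rpow_one, div_eq_mul_inv, div_eq_mul_inv, div_eq_mul_inv,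
    ENNReal.mul_inv (.inr (ENNReal.inv_ne_top.mpr hV))
      (.inr (ENNReal.inv_ne_zero.mpr ENNReal.ofReal_ne_top)), inv_inv]
  ring

end Cube

def apInvExponent (p : ℝ) : ℝ≥0∞ := if p = 1 then ⊤ else ENNReal.ofReal (1 / (p - 1))

section Exponents

variable {p : ℝ}

lemma apInvExponent_ne_zero (hp : 1 ≤ p) : apInvExponent p ≠ 0 := by
  rcases hp.eq_or_lt with rfl | hp
  · simp [apInvExponent]
  · simp [apInvExponent, hp.ne', hp]

lemma toReal_one_div_apInvExponent (hp : 1 ≤ p) : (1 / apInvExponent p).toReal = p - 1 := by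
  rcases hp.eq_or_lt with rfl | hp
  · simp [apInvExponent]
  · rw [apInvExponent, if_neg hp.ne', ENNReal.toReal_div, ENNReal.toReal_ofReal (by positivity)]
    simp

lemma apInvExponent_anti {u : ℝ} (hu : 1 ≤ u) (hup : u ≤ p) :
    apInvExponent p ≤ apInvExponent u := by
  rcases hu.eq_or_lt with rfl | hu
  · simp [apInvExponent]
  · rw [apInvExponent, apInvExponent, if_neg (hu.trans_le hup).ne', if_neg hu.ne']
    exact ENNReal.ofReal_le_ofReal (one_div_le_one_div_of_le (by linarith) (by linarith))

lemma conjE_mul_ofReal_one_div (hp : 1 ≤ p) :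
    conjE p * ENNReal.ofReal (1 / p) = apInvExponent p := by
  rcases hp.eq_or_lt with rfl | hp
  · simp [conjE, apInvExponent]
  · rw [conjE, apInvExponent, if_neg hp.ne', if_neg hp.ne', ← ENNReal.ofReal_mul (by positivity)]
    congr 1
    field_simp

lemma holderConjugate_conjE (hp : 1 ≤ p) :
    ENNReal.HolderConjugate (ENNReal.ofReal p) (conjE p) := by
  rcases hp.eq_or_lt with rfl | hp
  · simpa [conjE] using ENNReal.HolderConjugate.instOneInfty
  · rw [conjE, if_neg hp.ne']
    exact (Real.HolderConjugate.conjExponent hp).ennrealOfReal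

end Exponents

lemma one_le_eLpNorm_mul_eLpNorm_inv {α : Type*} [MeasurableSpace α] {μ : Measure α}
    [IsProbabilityMeasure μ] {f : α → ℝ} (hf : ∀ x, 0 < f x) (hfm : Measurable f)
    {u : ℝ} (hu : 1 ≤ u) :
    1 ≤ eLpNorm f 1 μ * eLpNorm (fun x => (f x)⁻¹) (apInvExponent u) μ := by
  have hu0 : 0 < 1 / u := by positivity
  have := holderConjugate_conjE hu
  have hfm' : Measurable fun x => (f x)⁻¹ := hfm.inv
  -- Hölder with exponents `u` and `u'` applied to `1 = f ^ (1/u) * f⁻¹ ^ (1/u)`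
  have holder : eLpNorm (fun x => ‖f x‖ ^ (1 / u) * ‖(f x)⁻¹‖ ^ (1 / u)) 1 μ ≤
      1 * eLpNorm (fun x => ‖f x‖ ^ (1 / u)) (ENNReal.ofReal u) μ *
        eLpNorm (fun x => ‖(f x)⁻¹‖ ^ (1 / u)) (conjE u) μ :=
    eLpNorm_le_eLpNorm_mul_eLpNorm'_of_norm (hfm.norm.pow_const _).aestronglyMeasurable
      (hfm'.norm.pow_const _).aestronglyMeasurable (· * ·) 1
      (.of_forall fun x => by simp [norm_mul])
  have hone : (fun x => ‖f x‖ ^ (1 / u) * ‖(f x)⁻¹‖ ^ (1 / u)) = fun _ => (1 : ℝ) := by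
    funext x
    rw [← Real.mul_rpow (norm_nonneg _) (norm_nonneg _), ← norm_mul,
      mul_inv_cancel₀ (hf x).ne', norm_one, Real.one_rpow]
  rw [hone, eLpNorm_norm_rpow _ hu0, eLpNorm_norm_rpow _ hu0, conjE_mul_ofReal_one_div hu,
    ← ENNReal.ofReal_mul (by linarith), mul_one_div_cancel (by linarith), ENNReal.ofReal_one,
    one_mul, ← ENNReal.mul_rpow_of_nonneg _ _ hu0.le] at holder
  have hconst : eLpNorm (fun _ => (1 : ℝ)) 1 μ = 1 := by
    simp [eLpNorm_const _ one_ne_zero (IsProbabilityMeasure.ne_zero μ)]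
  by_contra! hlt
  exact (holder.trans_lt (ENNReal.rpow_lt_one hlt hu0)).ne hconst

section Muckenhoupt

variable {d : ℕ} {w : Euc d → ℝ} {u p : ℝ}

lemma lavg_one_mul_lavg_inv_le_apChar (R : Cube d) :
    R.lavg 1 w * R.lavg (apInvExponent p) (fun x => (w x)⁻¹) ≤ apChar d p w :=
  le_iSup (fun R : Cube d => R.lavg 1 w * R.lavg (apInvExponent p) fun x => (w x)⁻¹) R

lemma apChar_anti (hwm : Measurable w) (hu : 1 ≤ u) (hup : u ≤ p) :
    apChar d p w ≤ apChar d u w :=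
  iSup_mono fun R => mul_le_mul_right (R.lavg_le_lavg_of_exponent_le
    (apInvExponent_ne_zero (hu.trans hup)) (apInvExponent_anti hu hup) hwm.inv) _

variable (hw : ∀ x, 0 < w x) (hwm : Measurable w)
include hw hwm

lemma one_le_lavg_one_mul_lavg_inv (hp : 1 ≤ p) (R : Cube d) :
    1 ≤ R.lavg 1 w * R.lavg (apInvExponent p) (fun x => (w x)⁻¹) := by
  rw [R.lavg_eq_eLpNorm one_ne_zero, R.lavg_eq_eLpNorm (apInvExponent_ne_zero hp)]
  exact one_le_eLpNorm_mul_eLpNorm_inv hw hwm hp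

lemma lavg_one_ne_zero (R : Cube d) : R.lavg 1 w ≠ 0 :=
  left_ne_zero_of_mul (zero_lt_one.trans_le (one_le_lavg_one_mul_lavg_inv hw hwm le_rfl R)).ne'

lemma lavg_one_ne_top (hu : 1 ≤ u) (hAu : apChar d u w ≠ ⊤) (R : Cube d) :
    R.lavg 1 w ≠ ⊤ := by
  have hR := one_le_lavg_one_mul_lavg_inv hw hwm hu R
  refine fun htop => hAu (eq_top_iff.mpr ((lavg_one_mul_lavg_inv_le_apChar R).trans' ?_))
  rw [htop, ENNReal.top_mul (right_ne_zero_of_mul (zero_lt_one.trans_le hR).ne')]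

lemma vol_rpow_div_lavg_one_le (hu : 1 ≤ u) (hAu : apChar d u w ≠ ⊤) {R Q : Cube d}
    (hRQ : R.toSet ⊆ Q.toSet) :
    ENNReal.ofReal R.vol ^ (u - 1) / R.lavg 1 w ≤
      apChar d u w * (ENNReal.ofReal Q.vol ^ (u - 1) / Q.lavg 1 w) := by
  set s : Cube d → ℝ≥0∞ := fun R => R.lavg (apInvExponent u) fun x => (w x)⁻¹
  have hR : 1 ≤ R.lavg 1 w * s R := one_le_lavg_one_mul_lavg_inv hw hwm hu R
  have hRs : s R ≠ 0 := right_ne_zero_of_mul (zero_lt_one.trans_le hR).ne'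
  have hQ : s Q ≤ apChar d u w / Q.lavg 1 w := by
    rw [ENNReal.le_div_iff_mul_le (.inl (lavg_one_ne_zero hw hwm Q)) (.inr hAu), mul_comm]
    exact lavg_one_mul_lavg_inv_le_apChar Q
  calc ENNReal.ofReal R.vol ^ (u - 1) / R.lavg 1 w
      ≤ ENNReal.ofReal R.vol ^ (u - 1) * s R := by
        rw [div_eq_mul_inv]
        gcongr
        exact (ENNReal.inv_le_iff_le_mul (fun _ => lavg_one_ne_zero hw hwm R)
          (fun _ => hRs)).mpr hR
    _ ≤ ENNReal.ofReal Q.vol ^ (u - 1) * s Q := by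
        simpa only [toReal_one_div_apInvExponent hu] using
          Cube.ofReal_vol_rpow_mul_lavg_mono hRQ (apInvExponent_ne_zero hu) fun x => (w x)⁻¹
    _ ≤ ENNReal.ofReal Q.vol ^ (u - 1) * (apChar d u w / Q.lavg 1 w) := by gcongr
    _ = apChar d u w * (ENNReal.ofReal Q.vol ^ (u - 1) / Q.lavg 1 w) := by
        simp only [div_eq_mul_inv]
        ring

lemma muck_summand_le {q : ℝ} (hu : 1 ≤ u) (hup : u ≤ p) (hpq : p ≤ q)
    (hAu : apChar d u w ≠ ⊤) {R Q : Cube d} (hRQ : R.toSet ⊆ Q.toSet) :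
    ENNReal.ofReal (R.vol ^ ((u - 1) * (1 / p - 1 / q))) *
        R.lavg (ENNReal.ofReal q) (fun x => w x ^ (1 / q)) *
        R.lavg (conjE p) (fun x => (w x ^ (1 / p))⁻¹) ≤
      apChar d p w ^ (1 / p) *
        (apChar d u w * (ENNReal.ofReal Q.vol ^ (u - 1) / Q.lavg 1 w)) ^ (1 / p - 1 / q) := by
  have hp : 1 ≤ p := hu.trans hup
  have hq : 0 < q := by linarith
  have hβ : 0 ≤ 1 / p - 1 / q := sub_nonneg.mpr (one_div_le_one_div_of_le (by linarith) hpq)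
  set a := R.lavg 1 w
  set s := R.lavg (apInvExponent p) fun x => (w x)⁻¹
  have hω : R.lavg (ENNReal.ofReal q) (fun x => w x ^ (1 / q)) = a ^ (1 / q) := by
    rw [R.lavg_rpow (ENNReal.ofReal_pos.mpr hq).ne' (fun x => (hw x).le) (by positivity),
      ← ENNReal.ofReal_mul hq.le, mul_one_div_cancel hq.ne', ENNReal.ofReal_one]
  have hσ : R.lavg (conjE p) (fun x => (w x ^ (1 / p))⁻¹) = s ^ (1 / p) := by
    have hp' : conjE p ≠ 0 := by
      refine left_ne_zero_of_mul (b := ENNReal.ofReal (1 / p)) ?_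
      rw [conjE_mul_ofReal_one_div hp]
      exact apInvExponent_ne_zero hp
    simp_rw [← Real.inv_rpow (hw _).le]
    rw [R.lavg_rpow hp' (fun x => (inv_pos.mpr (hw x)).le) (by positivity),
      conjE_mul_ofReal_one_div hp]
  have ha0 : a ≠ 0 := lavg_one_ne_zero hw hwm R
  have hatop : a ≠ ⊤ := lavg_one_ne_top hw hwm hu hAu R
  have hsplit : ENNReal.ofReal (R.vol ^ ((u - 1) * (1 / p - 1 / q))) * a ^ (1 / q) * s ^ (1 / p)
      = (ENNReal.ofReal R.vol ^ (u - 1) / a) ^ (1 / p - 1 / q) * (a * s) ^ (1 / p) := by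
    have ha : a ^ (1 / q) = a ^ (-(1 / p - 1 / q)) * a ^ (1 / p) := by
      rw [← ENNReal.rpow_add _ _ ha0 hatop]
      ring_nf
    rw [ENNReal.div_rpow_of_nonneg _ _ hβ, ENNReal.mul_rpow_of_nonneg _ _ (by positivity),
      ← ENNReal.rpow_mul, ← ENNReal.ofReal_rpow_of_pos R.vol_pos, ha, ENNReal.rpow_neg,
      ENNReal.div_eq_inv_mul]
    ring
  rw [hω, hσ, hsplit, mul_comm]
  gcongr
  · exact lavg_one_mul_lavg_inv_le_apChar R
  · exact vol_rpow_div_lavg_one_le hw hwm hu hAu hRQ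

end Muckenhoupt

/-- For `w ∈ A_u`, `1 ≤ u ≤ p ≤ q` and `α = (u-1)(1/p - 1/q)`,
`[w^{1/q}, w^{1/p}]_{A^α_{p,q}(Q)} ≤ [w]_{A_p}^{1/p} [w]_{A_u}^{1/p-1/q} (|Q|^u / w(Q))^{1/p-1/q}`;
in particular `(w^{1/q}, w^{1/p}) ∈ A^α_{p,q}(Q)`. -/
theorem muck_of_ap (d : ℕ) (Q : Cube d) (u p q : ℝ)
    (hu : 1 ≤ u) (hup : u ≤ p) (hpq : p ≤ q)
    (w : Euc d → ℝ) (hw : ∀ x, 0 < w x) (hwm : Measurable w)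
    (hAu : apChar d u w ≠ ⊤) :
    muck Q p q ((u - 1) * (1 / p - 1 / q))
        (fun x => w x ^ (1 / q)) (fun x => w x ^ (1 / p)) ≤
      apChar d p w ^ (1 / p) * apChar d u w ^ (1 / p - 1 / q) *
        (ENNReal.ofReal (Q.vol ^ u) /
            ∫⁻ x in Q.toSet, ENNReal.ofReal (w x)) ^ (1 / p - 1 / q) ∧
      muck Q p q ((u - 1) * (1 / p - 1 / q))
        (fun x => w x ^ (1 / q)) (fun x => w x ^ (1 / p)) ≠ ⊤ := by
  have hp : 0 < p := by linarith
  have hβ : 0 ≤ 1 / p - 1 / q := sub_nonneg.mpr (one_div_le_one_div_of_le hp hpq)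
  have hbound : muck Q p q ((u - 1) * (1 / p - 1 / q))
      (fun x => w x ^ (1 / q)) (fun x => w x ^ (1 / p)) ≤
      apChar d p w ^ (1 / p) *
        (apChar d u w * (ENNReal.ofReal Q.vol ^ (u - 1) / Q.lavg 1 w)) ^ (1 / p - 1 / q) :=
    iSup_le fun R => muck_summand_le hw hwm hu hup hpq hAu R.2
  have hfinite : apChar d p w ^ (1 / p) *
      (apChar d u w * (ENNReal.ofReal Q.vol ^ (u - 1) / Q.lavg 1 w)) ^ (1 / p - 1 / q) ≠ ⊤ :=
    ENNReal.mul_ne_top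
      (ENNReal.rpow_ne_top_of_nonneg (by positivity)
        (ne_top_of_le_ne_top hAu (apChar_anti hwm hu hup)))
      (ENNReal.rpow_ne_top_of_nonneg hβ (ENNReal.mul_ne_top hAu
        (ENNReal.div_lt_top (ENNReal.rpow_ne_top_of_nonneg (by linarith) ENNReal.ofReal_ne_top)
          (lavg_one_ne_zero hw hwm Q)).ne))
  rw [Q.ofReal_vol_rpow_div_lavg_one (fun x => (hw x).le), ENNReal.mul_rpow_of_nonneg _ _ hβ,
    ← mul_assoc] at hbound hfinite
  exact ⟨hbound, ne_top_of_le_ne_top hfinite hbound⟩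
end
end

section
/- Let $Q \subseteq \mathbb{R}^d$ be a cube, $1 \le r \le p \le q < \infty$, $s \in (0,1)$, and let $\omega,\sigma$ be weights with $\sigma^{-1}\in L^{p'}(Q)$. Suppose there exists $C > 0$ such that for all $u \in F^{s,\sigma}_{p,r}(Q)$ one has $\|u-\langle u\rangle_Q\|_{L^{q,\infty}_\omega(Q)} \le C\,[u]_{F^{s,\sigma}_{p,r}(Q)}$ and $\frac{\omega^q(Q)^{1/q}}{|Q|}\|u-\langle u\rangle_Q\|_{L^1(Q)} \le C\,[u]_{F^{s,\sigma}_{p,r}(Q)}$. Then for all $u \in F^{s,\sigma}_{p,r}(Q)$, $\|u-\langle u\rangle_Q\|_{L^q_\omega(Q)} \le 58C\,[u]_{F^{s,\sigma}_{p,r}(Q)}$. -/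
/-!
Write `v = |u - ⟨u⟩_Q|`, `λ = ⟨v⟩_Q` and truncate `v` at the dyadic levels `t_k = 2^(k+1) λ`:
`v_k = min ((v - t_k)₊) t_k`. On the layer `{2^(k+2) λ ≤ v < 2^(k+3) λ}` the truncation `v_k`
equals `t_k` while `⟨v_k⟩_Q ≤ λ`, so the weak-type bound applied to `v_k` controls the `ω^q`-mass
of that layer by `[v_k]`; the set `{v < 4λ}` is controlled by the average bound. Summing over the
layers needs `∑_k [v_k]^q ≲ [u]^q`, which follows from the pointwise estimate
`∑_k |v_k(x) - v_k(y)|^r ≤ 4 |v(x) - v(y)|^r` through `ℓ^r ⊆ ℓ^p ⊆ ℓ^q`.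
-/

open MeasureTheory
open scoped ENNReal NNReal

noncomputable section

theorem ENNReal.tsum_rpow_le_rpow_tsum {ι : Type*} (f : ι → ℝ≥0∞) {m : ℝ} (hm : 1 ≤ m) :
    ∑' i, f i ^ m ≤ (∑' i, f i) ^ m := by
  have hfin (s : Finset ι) : ∑ i ∈ s, f i ^ m ≤ (∑ i ∈ s, f i) ^ m := by
    induction s using Finset.cons_induction with
    | empty => simp [ENNReal.zero_rpow_of_pos (by linarith : (0 : ℝ) < m)]
    | cons a s _ ih =>
      rw [Finset.sum_cons, Finset.sum_cons]
      exact (add_le_add le_rfl ih).trans (ENNReal.add_rpow_le_rpow_add _ _ hm)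
  rw [ENNReal.tsum_eq_iSup_sum]
  exact iSup_le fun s =>
    (hfin s).trans (ENNReal.rpow_le_rpow (ENNReal.sum_le_tsum s) (by linarith))

theorem ENNReal.rpow_add_mul_rpow_le {q : ℝ} (hq : 1 ≤ q) (a c : ℝ≥0∞) {b S : ℝ≥0∞}
    (hS : S ≤ b ^ q) : (a ^ q + c ^ q * S) ^ (1 / q) ≤ a + c * b :=
  calc _ ≤ (a ^ q + (c * b) ^ q) ^ (1 / q) := by
        rw [ENNReal.mul_rpow_of_nonneg _ _ (by linarith)]
        gcongr
    _ ≤ a + c * b := ENNReal.rpow_add_rpow_le_add _ _ hq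

def truncAt (t z : ℝ) : ℝ := min (max (z - t) 0) t

namespace truncAt
variable {t a b : ℝ}

theorem continuous (t : ℝ) : Continuous (truncAt t) := by
  unfold truncAt; fun_prop

theorem nonneg (ht : 0 ≤ t) : 0 ≤ truncAt t a := le_min (le_max_right _ _) ht

theorem le_self (ht : 0 ≤ t) (ha : 0 ≤ a) : truncAt t a ≤ a :=
  (min_le_left _ _).trans (max_le (by linarith) ha)

theorem eq_zero_of_le (ht : 0 ≤ t) (h : a ≤ t) : truncAt t a = 0 := by
  rw [truncAt, max_eq_right (by linarith), min_eq_left ht]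

theorem eq_of_two_mul_le (ht : 0 ≤ t) (h : 2 * t ≤ a) : truncAt t a = t := by
  rw [truncAt, max_eq_left (by linarith), min_eq_right (by linarith)]

theorem mono (t : ℝ) : Monotone (truncAt t) := fun _ _ h =>
  min_le_min_right _ (max_le_max_right _ (sub_le_sub_right h _))

theorem abs_sub_le (t a b : ℝ) : |truncAt t a - truncAt t b| ≤ |a - b| := by
  unfold truncAt
  rw [abs_le]
  constructor <;>
  · simp only [min_def, max_def]
    split_ifs <;> cases abs_cases (a - b) <;> linarith

theorem mul_sub_le (ht : 0 ≤ t) (ha : 0 ≤ a) (hab : a ≤ b) :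
    b * (truncAt t b - truncAt t a) ≤ 2 * t * (b - a) := by
  unfold truncAt
  simp only [min_def, max_def]
  split_ifs <;> nlinarith

end truncAt

theorem sum_range_ite_two_pow_mul_lt_le {c b : ℝ} (hc : 0 ≤ c) (hb : 0 ≤ b) (n : ℕ) :
    ∑ k ∈ Finset.range n, (if 2 ^ k * c < b then 2 ^ k * c else 0) ≤ 2 * b := by
  suffices h : ∑ k ∈ Finset.range n, (if 2 ^ k * c < b then 2 ^ k * c else 0) ≤ 2 ^ n * c ∧
      ∑ k ∈ Finset.range n, (if 2 ^ k * c < b then 2 ^ k * c else 0) ≤ 2 * b from h.2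
  induction n with
  | zero => simp [hc, hb]
  | succ n ih =>
    rw [Finset.sum_range_succ, pow_succ]
    split_ifs with h
    · constructor <;> linarith [ih.1]
    · have : 0 ≤ 2 ^ n * c := by positivity
      constructor <;> linarith [ih.1, ih.2]

-- For `a ≤ b` only the levels `t < b` contribute, each at most `2 t (b - a) / b`,
-- and these levels form a geometric series below `b`.
theorem sum_range_abs_truncAt_sub_le {c a b : ℝ} (hc : 0 < c) (ha : 0 ≤ a) (hb : 0 ≤ b) (n : ℕ) :
    ∑ k ∈ Finset.range n, |truncAt (2 ^ k * c) a - truncAt (2 ^ k * c) b| ≤ 4 * |a - b| := by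
  wlog hab : a ≤ b generalizing a b
  · simpa only [abs_sub_comm] using this hb ha (le_of_not_ge hab)
  rcases hb.eq_or_lt with rfl | hb
  · obtain rfl : a = 0 := le_antisymm hab ha
    simp
  have hterm (k : ℕ) : b * |truncAt (2 ^ k * c) a - truncAt (2 ^ k * c) b| ≤
      2 * (b - a) * (if 2 ^ k * c < b then 2 ^ k * c else 0) := by
    have ht : 0 ≤ 2 ^ k * c := by positivity
    rw [abs_sub_comm, abs_of_nonneg (sub_nonneg.2 (truncAt.mono _ hab))]
    split_ifs with h
    · linarith [truncAt.mul_sub_le ht ha hab]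
    · rw [truncAt.eq_zero_of_le ht (not_lt.1 h), truncAt.eq_zero_of_le ht (hab.trans (not_lt.1 h))]
      simp
  refine le_of_mul_le_mul_left ?_ hb
  calc b * ∑ k ∈ Finset.range n, |truncAt (2 ^ k * c) a - truncAt (2 ^ k * c) b|
      ≤ 2 * (b - a) * ∑ k ∈ Finset.range n, (if 2 ^ k * c < b then 2 ^ k * c else 0) := by
        rw [Finset.mul_sum, Finset.mul_sum]
        exact Finset.sum_le_sum fun k _ => hterm k
    _ ≤ 2 * (b - a) * (2 * b) :=
        mul_le_mul_of_nonneg_left (sum_range_ite_two_pow_mul_lt_le hc.le hb.le n) (by linarith)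
    _ = b * (4 * |a - b|) := by rw [abs_sub_comm, abs_of_nonneg (by linarith)]; ring

theorem tsum_abs_truncAt_sub_rpow_le {c a b r : ℝ} (hc : 0 < c) (ha : 0 ≤ a) (hb : 0 ≤ b)
    (hr : 1 ≤ r) :
    ∑' k : ℕ, ENNReal.ofReal |truncAt (2 ^ k * c) a - truncAt (2 ^ k * c) b| ^ r ≤
      4 * ENNReal.ofReal |a - b| ^ r := by
  set D := ENNReal.ofReal |a - b|
  -- Each term is at most `D`, so `x ^ r ≤ x * D ^ (r - 1)` reduces the claim to `r = 1`.
  have hsum : ∑' k : ℕ, ENNReal.ofReal |truncAt (2 ^ k * c) a - truncAt (2 ^ k * c) b| ≤ 4 * D := by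
    refine ENNReal.tsum_le_of_sum_range_le fun n => ?_
    rw [← ENNReal.ofReal_sum_of_nonneg fun _ _ => abs_nonneg _, ← ENNReal.ofReal_ofNat 4,
      ← ENNReal.ofReal_mul (by norm_num)]
    exact ENNReal.ofReal_le_ofReal (sum_range_abs_truncAt_sub_le hc ha hb n)
  have hsplit (x : ℝ≥0∞) : x ^ r = x * x ^ (r - 1) := by
    nth_rw 2 [← ENNReal.rpow_one x]
    rw [← ENNReal.rpow_add_of_nonneg _ _ zero_le_one (by linarith), add_sub_cancel]
  calc ∑' k : ℕ, ENNReal.ofReal |truncAt (2 ^ k * c) a - truncAt (2 ^ k * c) b| ^ r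
      ≤ ∑' k : ℕ, ENNReal.ofReal |truncAt (2 ^ k * c) a - truncAt (2 ^ k * c) b| * D ^ (r - 1) := by
        refine ENNReal.tsum_le_tsum fun k => ?_
        rw [hsplit]
        exact mul_le_mul_right (ENNReal.rpow_le_rpow
          (ENNReal.ofReal_le_ofReal (truncAt.abs_sub_le _ _ _)) (by linarith)) _
    _ ≤ 4 * D * D ^ (r - 1) := by
        rw [ENNReal.tsum_mul_right]; gcongr
    _ = 4 * D ^ r := by rw [mul_assoc, ← hsplit]

namespace Cube

variable {d : ℕ} (Q : Cube d)

theorem vol_pos_s15 : 0 < Q.vol := pow_pos Q.side_pos d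

theorem volume_toSet_s15 : volume Q.toSet = ENNReal.ofReal Q.vol := by
  have hQ : Q.toSet = WithLp.ofLp ⁻¹'
      Set.univ.pi fun i => Set.Ico (Q.center i - Q.side / 2) (Q.center i + Q.side / 2) := by
    ext x; simp [toSet]
  rw [hQ, (PiLp.volume_preserving_ofLp (Fin d)).measure_preimage
    (MeasurableSet.univ_pi fun _ => measurableSet_Ico).nullMeasurableSet, Real.volume_pi_Ico]
  simp [vol, ENNReal.ofReal_pow Q.side_pos.le]

theorem integral_eq_vol_mul_avg (f : Euc d → ℝ) : ∫ x in Q.toSet, f x = Q.vol * Q.avg f := by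
  rw [avg, ← mul_assoc, mul_inv_cancel₀ Q.vol_pos_s15.ne', one_mul]

theorem div_ofReal_vol_mul_ofReal_integral (X : ℝ≥0∞) (f : Euc d → ℝ) :
    X / ENNReal.ofReal Q.vol * ENNReal.ofReal (∫ x in Q.toSet, f x) =
      X * ENNReal.ofReal (Q.avg f) := by
  rw [avg, ENNReal.ofReal_mul (inv_nonneg.2 Q.vol_pos_s15.le), ENNReal.ofReal_inv_of_pos Q.vol_pos_s15,
    div_eq_mul_inv, mul_assoc]

variable {Q}

theorem avg_mono {f g : Euc d → ℝ} (hf : IntegrableOn f Q.toSet) (hg : IntegrableOn g Q.toSet)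
    (h : ∀ x, f x ≤ g x) : Q.avg f ≤ Q.avg g :=
  mul_le_mul_of_nonneg_left (integral_mono hf hg h) (inv_nonneg.2 Q.vol_pos_s15.le)

theorem avg_nonneg {f : Euc d → ℝ} (h : ∀ x, 0 ≤ f x) : 0 ≤ Q.avg f :=
  mul_nonneg (inv_nonneg.2 Q.vol_pos_s15.le) (integral_nonneg h)

end Cube

theorem abs_abs_sub_sub_abs_sub_le (a b m : ℝ) : |(|a - m|) - (|b - m|)| ≤ |a - b| :=
  (abs_abs_sub_abs_le_abs_sub _ _).trans_eq <| by rw [sub_sub_sub_cancel_right]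

section Fractional

variable {d : ℕ} {A : Set (Euc d)} {s r p : ℝ}

theorem measurable_fsr {f : Euc d → ℝ} (hf : Measurable f) : Measurable (fsr A s r f) := by
  have : Measurable fun z : Euc d × Euc d =>
      ENNReal.ofReal |f z.1 - f z.2| ^ r / edist z.1 z.2 ^ ((d : ℝ) + s * r) := by
    fun_prop
  exact this.lintegral_prod_right'.pow_const _

theorem fsr_rpow (f : Euc d → ℝ) (x : Euc d) :
    fsr A s r f x ^ p =
      (∫⁻ y in A, ENNReal.ofReal |f x - f y| ^ r / edist x y ^ ((d : ℝ) + s * r)) ^ (p / r) := by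
  rw [fsr, ← ENNReal.rpow_mul, one_div_mul_eq_div]

theorem fsr_le_fsr {f g : Euc d → ℝ} {x : Euc d} (hr : 0 ≤ r)
    (h : ∀ y, |f x - f y| ≤ |g x - g y|) : fsr A s r f x ≤ fsr A s r g x := by
  unfold fsr
  gcongr ((∫⁻ y in A, ENNReal.ofReal ?_ ^ r / _) ^ _) with y
  exact h y

theorem fSemi_le_fSemi {Q : Cube d} {σ f g : Euc d → ℝ} (hp : 0 ≤ p) (hr : 0 ≤ r)
    (h : ∀ x y, |f x - f y| ≤ |g x - g y|) : fSemi Q p r s σ f ≤ fSemi Q p r s σ g := by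
  unfold fSemi
  gcongr with x
  exact fsr_le_fsr hr (h x)

theorem tsum_fsr_rpow_le {f : ℕ → Euc d → ℝ} {g : Euc d → ℝ} {K : ℝ≥0∞} {x : Euc d}
    (hr : 0 < r) (hrp : r ≤ p) (hK : K ≠ ⊤) (hf : ∀ k, Measurable (f k))
    (h : ∀ y, ∑' k, ENNReal.ofReal |f k x - f k y| ^ r ≤ K * ENNReal.ofReal |g x - g y| ^ r) :
    ∑' k, fsr A s r (f k) x ^ p ≤ K ^ (p / r) * fsr A s r g x ^ p := by
  have hpr : 1 ≤ p / r := (one_le_div hr).2 hrp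
  simp only [fsr_rpow]
  rw [← ENNReal.mul_rpow_of_nonneg _ _ (by linarith)]
  refine (ENNReal.tsum_rpow_le_rpow_tsum _ hpr).trans (ENNReal.rpow_le_rpow ?_ (by linarith))
  have hmeas (k : ℕ) : AEMeasurable (fun y =>
      ENNReal.ofReal |f k x - f k y| ^ r / edist x y ^ ((d : ℝ) + s * r)) (volume.restrict A) := by
    have := hf k
    fun_prop
  rw [← lintegral_tsum hmeas, ← lintegral_const_mul' _ _ hK]
  refine lintegral_mono fun y => ?_
  simp only [div_eq_mul_inv, ENNReal.tsum_mul_right, ← mul_assoc]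
  gcongr
  exact h y

theorem tsum_fSemi_rpow_le {Q : Cube d} {σ : Euc d → ℝ} {f : ℕ → Euc d → ℝ} {g : Euc d → ℝ}
    {K : ℝ≥0∞} {q : ℝ} (hr : 0 < r) (hrp : r ≤ p) (hpq : p ≤ q) (hK : K ≠ ⊤)
    (hf : ∀ k, Measurable (f k)) (hσ : Measurable σ)
    (h : ∀ x y, ∑' k, ENNReal.ofReal |f k x - f k y| ^ r ≤ K * ENNReal.ofReal |g x - g y| ^ r) :
    ∑' k, fSemi Q p r s σ (f k) ^ q ≤ K ^ (q / r) * fSemi Q p r s σ g ^ q := by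
  have hp : 0 < p := hr.trans_le hrp
  have hqp : 1 ≤ q / p := (one_le_div hp).2 hpq
  have hfSemi (u : Euc d → ℝ) : fSemi Q p r s σ u ^ q =
      (∫⁻ x in Q.toSet, fsr Q.toSet s r u x ^ p * ENNReal.ofReal (σ x) ^ p) ^ (q / p) := by
    rw [fSemi, ← ENNReal.rpow_mul, one_div_mul_eq_div]
  have hKq : K ^ (q / r) = (K ^ (p / r)) ^ (q / p) := by
    rw [← ENNReal.rpow_mul]; congr 1; field_simp
  simp only [hfSemi]
  rw [hKq, ← ENNReal.mul_rpow_of_nonneg _ _ (by linarith)]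
  refine (ENNReal.tsum_rpow_le_rpow_tsum _ hqp).trans (ENNReal.rpow_le_rpow ?_ (by linarith))
  have hmeas (k : ℕ) : AEMeasurable (fun x =>
      fsr Q.toSet s r (f k) x ^ p * ENNReal.ofReal (σ x) ^ p) (volume.restrict Q.toSet) := by
    have := measurable_fsr (A := Q.toSet) (s := s) (r := r) (hf k)
    fun_prop
  rw [← lintegral_tsum hmeas,
    ← lintegral_const_mul' _ _ (ENNReal.rpow_ne_top_of_nonneg (by positivity) hK)]
  refine lintegral_mono fun x => ?_
  rw [ENNReal.tsum_mul_right, ← mul_assoc]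
  gcongr
  exact tsum_fsr_rpow_le hr hrp hK hf (h x)

theorem fSemi_truncAt_abs_sub_le {Q : Cube d} {t m : ℝ} {σ u : Euc d → ℝ} (hp : 0 ≤ p)
    (hr : 0 ≤ r) : fSemi Q p r s σ (fun x => truncAt t |u x - m|) ≤ fSemi Q p r s σ u :=
  fSemi_le_fSemi hp hr fun _ _ =>
    (truncAt.abs_sub_le _ _ _).trans (abs_abs_sub_sub_abs_sub_le _ _ _)

theorem tsum_fSemi_truncAt_rpow_le {Q : Cube d} {q c m : ℝ} {σ u : Euc d → ℝ}
    (hc : 0 < c) (hr : 1 ≤ r) (hrp : r ≤ p) (hpq : p ≤ q) (hu : Measurable u)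
    (hσ : Measurable σ) :
    ∑' k : ℕ, fSemi Q p r s σ (fun x => truncAt (2 ^ k * c) |u x - m|) ^ q ≤
      4 ^ q * fSemi Q p r s σ u ^ q := by
  refine (tsum_fSemi_rpow_le (f := fun k x => truncAt (2 ^ k * c) |u x - m|) (g := u) (K := 4)
    (by linarith) hrp hpq (by norm_num)
    (fun k => (truncAt.continuous _).measurable.comp (hu.sub measurable_const).abs) hσ
    fun x y => ?_).trans ?_
  · refine (tsum_abs_truncAt_sub_rpow_le hc (abs_nonneg _) (abs_nonneg _) hr).trans ?_
    gcongr 4 * ENNReal.ofReal ?_ ^ r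
    exact abs_abs_sub_sub_abs_sub_le _ _ _
  · gcongr
    · norm_num
    · exact div_le_self (by linarith) hr

end Fractional

section LayerCake

variable {α : Type*} [MeasurableSpace α] {μ : Measure α} {Ω : α → ℝ≥0∞} {q : ℝ}

theorem setLIntegral_rpow_mul_le {f : α → ℝ≥0∞} {s : Set α} {M : ℝ≥0∞} (hs : MeasurableSet s)
    (hq : 0 < q) (hM : M ≠ ⊤) (h : ∀ x ∈ s, f x ≤ M) :
    ∫⁻ x in s, f x ^ q * Ω x ∂μ ≤ (M * (∫⁻ x in s, Ω x ∂μ) ^ (1 / q)) ^ q := by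
  rw [ENNReal.mul_rpow_of_nonneg _ _ hq.le, ← ENNReal.rpow_mul, one_div_mul_cancel hq.ne',
    ENNReal.rpow_one, ← lintegral_const_mul' _ _ (ENNReal.rpow_ne_top_of_nonneg hq.le hM)]
  exact setLIntegral_mono' hs fun x hx => by gcongr; exact h x hx

theorem lintegral_rpow_mul_le_of_dyadic_level_sets {v : α → ℝ} (hv : Measurable v) {c : ℝ}
    (hc : 0 < c) (hq : 0 < q) {A : ℝ≥0∞} {B : ℕ → ℝ≥0∞}
    (hlow : ENNReal.ofReal c * (∫⁻ x, Ω x ∂μ) ^ (1 / q) ≤ A)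
    (hshell : ∀ k : ℕ, ENNReal.ofReal (2 ^ k * c) *
      (∫⁻ x in {x | 2 ^ (k + 2) * c ≤ v x ∧ v x < 2 ^ (k + 3) * c}, Ω x ∂μ) ^ (1 / q) ≤ B k) :
    ∫⁻ x, ENNReal.ofReal (v x) ^ q * Ω x ∂μ ≤ (4 * A) ^ q + 8 ^ q * ∑' k, B k ^ q := by
  set S : ℕ → Set α := fun k => {x | 2 ^ (k + 2) * c ≤ v x ∧ v x < 2 ^ (k + 3) * c}
  have hcover : {x | v x < 4 * c}ᶜ ⊆ ⋃ k, S k := by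
    intro x hx
    have h4c : 0 < 4 * c := by positivity
    obtain ⟨k, hk⟩ := exists_nat_pow_near ((one_le_div h4c).2 (not_lt.1 hx)) one_lt_two
    rw [le_div_iff₀ h4c, div_lt_iff₀ h4c] at hk
    refine Set.mem_iUnion.2 ⟨k, ?_, ?_⟩
    · linarith [show (2 : ℝ) ^ (k + 2) * c = 2 ^ k * (4 * c) by ring]
    · linarith [show (2 : ℝ) ^ (k + 3) * c = 2 ^ (k + 1) * (4 * c) by ring]
  rw [← lintegral_add_compl _ (measurableSet_lt hv measurable_const)]
  gcongr
  · calc ∫⁻ x in {x | v x < 4 * c}, ENNReal.ofReal (v x) ^ q * Ω x ∂μ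
        ≤ (ENNReal.ofReal (4 * c) * (∫⁻ x in {x | v x < 4 * c}, Ω x ∂μ) ^ (1 / q)) ^ q :=
          setLIntegral_rpow_mul_le (measurableSet_lt hv measurable_const) hq ENNReal.ofReal_ne_top
            fun x hx => ENNReal.ofReal_le_ofReal hx.le
      _ ≤ (4 * A) ^ q := by
          rw [ENNReal.ofReal_mul zero_le_four, ENNReal.ofReal_ofNat, mul_assoc]
          gcongr (4 * ?_) ^ q
          refine le_trans ?_ hlow
          gcongr ENNReal.ofReal c * ?_ ^ _
          exact setLIntegral_le_lintegral _ _
  · calc ∫⁻ x in {x | v x < 4 * c}ᶜ, ENNReal.ofReal (v x) ^ q * Ω x ∂μ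
        ≤ ∑' k, ∫⁻ x in S k, ENNReal.ofReal (v x) ^ q * Ω x ∂μ :=
          (lintegral_mono_set hcover).trans (lintegral_iUnion_le _ _)
      _ ≤ ∑' k, (8 * B k) ^ q := by
          gcongr with k
          refine (setLIntegral_rpow_mul_le ((measurableSet_le measurable_const hv).inter
            (measurableSet_lt hv measurable_const)) hq ENNReal.ofReal_ne_top
            fun x hx => ENNReal.ofReal_le_ofReal hx.2.le).trans ?_
          have h8 : ENNReal.ofReal (2 ^ (k + 3) * c) = 8 * ENNReal.ofReal (2 ^ k * c) := by
            rw [← ENNReal.ofReal_ofNat, ← ENNReal.ofReal_mul (by norm_num)]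
            ring_nf
          rw [h8, mul_assoc]
          gcongr (8 * ?_) ^ q
          exact hshell k
      _ = 8 ^ q * ∑' k, B k ^ q := by
          simp only [ENNReal.mul_rpow_of_nonneg _ _ hq.le, ENNReal.tsum_mul_left]

end LayerCake

section Weighted

variable {d : ℕ} {Q : Cube d} {q : ℝ} {ω : Euc d → ℝ}

theorem mul_setLIntegral_rpow_le_weakNE (hq : 0 ≤ q) {g : Euc d → ℝ≥0∞} {S : Set (Euc d)}
    (hS : MeasurableSet S) {a : ℝ≥0∞} (h : ∀ x ∈ S, a ≤ g x) :
    a * (∫⁻ x in S, ENNReal.ofReal (ω x) ^ q ∂volume.restrict Q.toSet) ^ (1 / q) ≤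
      weakNE Q q ω g := by
  refine ENNReal.mul_le_of_forall_lt fun a' ha' b hb => ?_
  lift a' to ℝ≥0 using ha'.ne_top
  refine le_trans ?_ (le_iSup _ a')
  gcongr
  refine hb.le.trans (ENNReal.rpow_le_rpow ?_ (by positivity))
  rw [Measure.restrict_restrict hS]
  exact lintegral_mono_set fun x hx => ⟨hx.2, ha'.trans_le (h x hx.1)⟩

theorem wLp_eq_lintegral (A : Set (Euc d)) (hq : 0 ≤ q) (g : Euc d → ℝ) :
    wLp A q ω g =
      (∫⁻ x in A, ENNReal.ofReal |g x| ^ q * ENNReal.ofReal (ω x) ^ q) ^ (1 / q) := by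
  simp only [wLp, ENNReal.ofReal_mul (abs_nonneg _), ENNReal.mul_rpow_of_nonneg _ _ hq]

theorem wLp_eq_zero_of_avg_abs_eq_zero (hq : 0 < q) {g : Euc d → ℝ}
    (hg : IntegrableOn (fun x => |g x|) Q.toSet) (h : Q.avg (fun x => |g x|) = 0) :
    wLp Q.toSet q ω g = 0 := by
  have hzero : ∫ x in Q.toSet, |g x| = 0 := by rw [Q.integral_eq_vol_mul_avg, h, mul_zero]
  have hae := (integral_eq_zero_iff_of_nonneg (fun x => abs_nonneg (g x)) hg).1 hzero
  rw [wLp_eq_lintegral _ hq.le, lintegral_congr_ae (g := 0)]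
  · simp [ENNReal.zero_rpow_of_pos, hq]
  · filter_upwards [hae] with x hx
    simp [show |g x| = 0 from hx, ENNReal.zero_rpow_of_pos hq]

end Weighted

section Truncation

variable {d : ℕ} {Q : Cube d} {v : Euc d → ℝ} {t : ℝ}

theorem integrableOn_truncAt (hvm : Measurable v) (hv : IntegrableOn v Q.toSet)
    (hv0 : ∀ x, 0 ≤ v x) (ht : 0 ≤ t) : IntegrableOn (fun x => truncAt t (v x)) Q.toSet :=
  hv.mono' ((truncAt.continuous t).measurable.comp hvm).aestronglyMeasurable <|
    ae_of_all _ fun x => by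
      rw [Real.norm_eq_abs, abs_of_nonneg (truncAt.nonneg ht)]
      exact truncAt.le_self ht (hv0 x)

theorem le_abs_truncAt_sub_avg (hvm : Measurable v) (hv : IntegrableOn v Q.toSet)
    (hv0 : ∀ x, 0 ≤ v x) (k : ℕ) {x : Euc d} (hx : 2 ^ (k + 2) * Q.avg v ≤ v x) :
    2 ^ k * Q.avg v ≤ |truncAt (2 ^ k * (2 * Q.avg v)) (v x) -
      Q.avg (fun y => truncAt (2 ^ k * (2 * Q.avg v)) (v y))| := by
  have hc : 0 ≤ Q.avg v := Cube.avg_nonneg hv0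
  have ht : 0 ≤ 2 ^ k * (2 * Q.avg v) := by positivity
  have hx' : truncAt (2 ^ k * (2 * Q.avg v)) (v x) = 2 ^ k * (2 * Q.avg v) :=
    truncAt.eq_of_two_mul_le ht
      (by linarith [show 2 * (2 ^ k * (2 * Q.avg v)) = 2 ^ (k + 2) * Q.avg v by ring])
  have havg : Q.avg (fun y => truncAt (2 ^ k * (2 * Q.avg v)) (v y)) ≤ Q.avg v :=
    Cube.avg_mono (integrableOn_truncAt hvm hv hv0 ht) hv fun y => truncAt.le_self ht (hv0 y)
  have hpow : Q.avg v ≤ 2 ^ k * Q.avg v := le_mul_of_one_le_left hc (one_le_pow₀ one_le_two)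
  rw [hx']
  exact le_abs.2 (Or.inl (by linarith))

theorem ofReal_mul_setLIntegral_rpow_le_weakN_truncAt {q : ℝ} (hq : 0 ≤ q) {ω : Euc d → ℝ}
    (hvm : Measurable v) (hv : IntegrableOn v Q.toSet) (hv0 : ∀ x, 0 ≤ v x) (k : ℕ) :
    ENNReal.ofReal (2 ^ k * Q.avg v) *
        (∫⁻ x in {x | 2 ^ (k + 2) * Q.avg v ≤ v x ∧ v x < 2 ^ (k + 3) * Q.avg v},
          ENNReal.ofReal (ω x) ^ q ∂volume.restrict Q.toSet) ^ (1 / q) ≤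
      weakN Q q ω fun x => truncAt (2 ^ k * (2 * Q.avg v)) (v x) -
        Q.avg (fun y => truncAt (2 ^ k * (2 * Q.avg v)) (v y)) :=
  mul_setLIntegral_rpow_le_weakNE hq
    ((measurableSet_le measurable_const hvm).inter (measurableSet_lt hvm measurable_const))
    fun _ hx => ENNReal.ofReal_le_ofReal (le_abs_truncAt_sub_avg hvm hv hv0 k hx.1)

end Truncation

theorem weak_implies_strong_fractional_general (d : ℕ) (Q : Cube d) (p q r s : ℝ)
    (hr : 1 ≤ r) (hrp : r ≤ p) (hpq : p ≤ q)
    (ω σ : Euc d → ℝ)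
    (hσm : Measurable σ)
    (C : ℝ)
    (hweak : ∀ u : Euc d → ℝ, Measurable u → IntegrableOn u Q.toSet →
        fSemi Q p r s σ u ≠ ⊤ →
      weakN Q q ω (fun x => u x - Q.avg u) ≤ ENNReal.ofReal C * fSemi Q p r s σ u)
    (havg : ∀ u : Euc d → ℝ, Measurable u → IntegrableOn u Q.toSet →
        fSemi Q p r s σ u ≠ ⊤ →
      (∫⁻ x in Q.toSet, ENNReal.ofReal (ω x) ^ q) ^ (1 / q) / ENNReal.ofReal Q.vol *
          ENNReal.ofReal (∫ x in Q.toSet, |u x - Q.avg u|) ≤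
        ENNReal.ofReal C * fSemi Q p r s σ u) :
    ∀ u : Euc d → ℝ, Measurable u → IntegrableOn u Q.toSet →
      fSemi Q p r s σ u ≠ ⊤ →
      wLp Q.toSet q ω (fun x => u x - Q.avg u) ≤
        ENNReal.ofReal (58 * C) * fSemi Q p r s σ u := by
  intro u hu hui hF
  have hq : 1 ≤ q := hr.trans (hrp.trans hpq)
  have hq0 : 0 < q := by linarith
  set v : Euc d → ℝ := fun x => |u x - Q.avg u|
  have hv : ∀ x, 0 ≤ v x := fun x => abs_nonneg _
  have hvm : Measurable v := (hu.sub measurable_const).abs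
  have hvi : IntegrableOn v Q.toSet :=
    (hui.sub (integrableOn_const (by simp [Q.volume_toSet_s15]))).abs
  rcases (Cube.avg_nonneg hv).eq_or_lt with hv0 | hv0
  · simp [wLp_eq_zero_of_avg_abs_eq_zero hq0 hvi hv0.symm]
  set X := ENNReal.ofReal C * fSemi Q p r s σ u
  set U : ℕ → Euc d → ℝ := fun k x => truncAt (2 ^ k * (2 * Q.avg v)) (v x)
  have hlow :
      ENNReal.ofReal (Q.avg v) * (∫⁻ x in Q.toSet, ENNReal.ofReal (ω x) ^ q) ^ (1 / q) ≤ X := by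
    rw [mul_comm]
    exact (Q.div_ofReal_vol_mul_ofReal_integral _ _).symm.trans_le (havg u hu hui hF)
  have hshell (k : ℕ) := (ofReal_mul_setLIntegral_rpow_le_weakN_truncAt (ω := ω) hq0.le
    hvm hvi hv k).trans <| hweak (U k) ((truncAt.continuous _).measurable.comp hvm)
      (integrableOn_truncAt hvm hvi hv (by positivity))
      (ne_top_of_le_ne_top hF (fSemi_truncAt_abs_sub_le (by linarith) (by linarith)))
  have hsum : ∑' k, (ENNReal.ofReal C * fSemi Q p r s σ (U k)) ^ q ≤ (4 * X) ^ q := by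
    simp only [X, ENNReal.mul_rpow_of_nonneg _ _ hq0.le, ENNReal.tsum_mul_left]
    rw [mul_left_comm]
    gcongr
    exact tsum_fSemi_truncAt_rpow_le (by positivity) hr hrp hpq hu hσm
  rw [wLp_eq_lintegral _ hq0.le]
  calc _ ≤ ((4 * X) ^ q + 8 ^ q * ∑' k, (ENNReal.ofReal C * fSemi Q p r s σ (U k)) ^ q) ^ (1 / q) :=
        by gcongr; exact lintegral_rpow_mul_le_of_dyadic_level_sets hvm hv0 hq0 hlow hshell
    _ ≤ 4 * X + 8 * (4 * X) := ENNReal.rpow_add_mul_rpow_le hq _ _ hsum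
    _ ≤ ENNReal.ofReal (58 * C) * fSemi Q p r s σ u := by
        rw [ENNReal.ofReal_mul (by norm_num), ENNReal.ofReal_ofNat, mul_assoc]
        ring_nf
        gcongr
        norm_num

/-- Proposition A.2, fractional weak implies strong: for
`1 ≤ r ≤ p ≤ q`, if the weak-type and average bounds with constant `C` hold for
every `u ∈ F^{s,σ}_{p,r}(Q)`, then the strong bound holds with constant `58 C`. -/
theorem weak_implies_strong_fractional (d : ℕ) (Q : Cube d) (p q r s : ℝ)
    (hr : 1 ≤ r) (hrp : r ≤ p) (hpq : p ≤ q) (hs : 0 < s) (hs1 : s < 1)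
    (ω σ : Euc d → ℝ) (hω : ∀ x, 0 < ω x) (hσ : ∀ x, 0 < σ x)
    (hωm : Measurable ω) (hσm : Measurable σ)
    (hσ' : Q.lavg (conjE p) (fun x => (σ x)⁻¹) ≠ ⊤)
    (C : ℝ) (hC : 0 < C)
    (hweak : ∀ u : Euc d → ℝ, Measurable u → IntegrableOn u Q.toSet →
        fSemi Q p r s σ u ≠ ⊤ →
      weakN Q q ω (fun x => u x - Q.avg u) ≤ ENNReal.ofReal C * fSemi Q p r s σ u)
    (havg : ∀ u : Euc d → ℝ, Measurable u → IntegrableOn u Q.toSet →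
        fSemi Q p r s σ u ≠ ⊤ →
      (∫⁻ x in Q.toSet, ENNReal.ofReal (ω x) ^ q) ^ (1 / q) / ENNReal.ofReal Q.vol *
          ENNReal.ofReal (∫ x in Q.toSet, |u x - Q.avg u|) ≤
        ENNReal.ofReal C * fSemi Q p r s σ u) :
    ∀ u : Euc d → ℝ, Measurable u → IntegrableOn u Q.toSet →
      fSemi Q p r s σ u ≠ ⊤ →
      wLp Q.toSet q ω (fun x => u x - Q.avg u) ≤
        ENNReal.ofReal (58 * C) * fSemi Q p r s σ u :=
  weak_implies_strong_fractional_general d Q p q r s hr hrp hpq ω σ hσm C hweak havg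
end
end
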